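/- arXiv:2604.13414 — 2 statements merged into one kernel-verified Lean document; each statement's English description precedes it below -/
import Mathlib

section
/- With λ = 1 - 1/T_mix (T_mix ≥ 1), the constant-mean-shift quadratic form of the AR(1) precision matrix satisfies 𝟙ᵀ Σ⁻¹ 𝟙 ≤ n/T_mix + 2, so the KL divergence between two n-step stationary Gaussian AR(1) trajectories with identical covariance Σ and constant mean vectors μ𝟙 and μ'𝟙 is at most (μ-μ')²(n/T_mix + 2)/2. -/
/-!
The precision matrix `Σ⁻¹` of the AR(1) covariance is tridiagonal, so its row sums `Σ⁻¹𝟙` are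
explicit: `(1-λ)/(1+λ)` in the interior and `1/(1+λ)` at the two ends. That this vector `v`
satisfies `Σ v = 𝟙` reduces, row by row, to two geometric sums. Hence
`𝟙ᵀΣ⁻¹𝟙 = (n(1-λ)+2λ)/(1+λ) ≤ n(1-λ) + 2 = n/T_mix + 2`, and the KL quadratic form of the mean
shift `(μ-μ')𝟙` is `(μ-μ')²` times this.
-/

open Matrix Finset

def ar1Cov {R : Type*} [CommRing R] (n : ℕ) (l : R) : Matrix (Fin n) (Fin n) R :=
  Matrix.of fun i j => l ^ ((i : ℤ) - (j : ℤ)).natAbs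

theorem sum_range_pow_natAbs_sub_mul_one_sub {R : Type*} [CommRing R] (l : R) {n i : ℕ}
    (hi : i < n) :
    (∑ j ∈ range n, l ^ ((i : ℤ) - j).natAbs) * (1 - l) = 1 + l - l ^ (i + 1) - l ^ (n - i) := by
  have below : ∑ j ∈ range (i + 1), l ^ ((i : ℤ) - j).natAbs = ∑ k ∈ range (i + 1), l ^ k := by
    rw [← sum_range_reflect]
    refine sum_congr rfl fun j hj => ?_
    rw [mem_range] at hj
    congr 1
    omega
  have above : ∑ j ∈ Ico (i + 1) n, l ^ ((i : ℤ) - j).natAbs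
      = l * ∑ k ∈ range (n - i - 1), l ^ k := by
    rw [sum_Ico_eq_sum_range, mul_sum, show n - (i + 1) = n - i - 1 by omega]
    refine sum_congr rfl fun k _ => ?_
    rw [← pow_succ']
    congr 1
    omega
  have hpow : l ^ (n - i) = l * l ^ (n - i - 1) := by
    rw [← pow_succ']
    congr 1
    omega
  rw [← sum_range_add_sum_Ico _ (show i + 1 ≤ n by omega), below, above, add_mul, mul_assoc,
    geom_sum_mul_neg, geom_sum_mul_neg, hpow]
  ring

section Field

variable {K : Type*} [Field K]

/-- The row sums of `(1-λ²)⁻¹ · tridiag(-λ, 1+λ², -λ)` with both corner diagonal entries `1`,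
the inverse of `ar1Cov n λ`. -/
def ar1CovInvRowSums (n : ℕ) (l : K) : Fin n → K := fun j =>
  (1 - l + (if (j : ℕ) = 0 then l else 0) + (if (j : ℕ) = n - 1 then l else 0)) / (1 + l)

theorem ar1Cov_mulVec_ar1CovInvRowSums (n : ℕ) {l : K} (hl : 1 + l ≠ 0) :
    ar1Cov n l *ᵥ ar1CovInvRowSums n l = 1 := by
  funext i
  have hi := i.isLt
  simp only [mulVec, dotProduct, ar1Cov, of_apply, ar1CovInvRowSums, Pi.one_apply, mul_div_assoc',
    ← sum_div, div_eq_one_iff_eq hl]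
  rw [Fin.sum_univ_eq_sum_range (fun j => l ^ ((i : ℤ) - j).natAbs *
    (1 - l + (if j = 0 then l else 0) + (if j = n - 1 then l else 0))) n]
  simp only [mul_add, sum_add_distrib, mul_ite, mul_zero, sum_ite_eq', mem_range, ← sum_mul]
  rw [if_pos (by omega), if_pos (by omega), sum_range_pow_natAbs_sub_mul_one_sub l hi]
  have h0 : ((i : ℤ) - ((0 : ℕ) : ℤ)).natAbs = i := by omega
  have h1 : ((i : ℤ) - ((n - 1 : ℕ) : ℤ)).natAbs = n - 1 - i := by omega
  have hpow : l ^ (n - i) = l ^ (n - 1 - i) * l := by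
    rw [← pow_succ]
    congr 1
    omega
  rw [h0, h1, hpow]
  ring

theorem one_dotProduct_ar1CovInvRowSums {n : ℕ} (hn : 0 < n) (l : K) :
    1 ⬝ᵥ ar1CovInvRowSums n l = (n * (1 - l) + 2 * l) / (1 + l) := by
  simp only [dotProduct, ar1CovInvRowSums, Pi.one_apply, one_mul, ← sum_div]
  rw [Fin.sum_univ_eq_sum_range
    (fun j => 1 - l + (if j = 0 then l else 0) + (if j = n - 1 then l else 0)) n]
  simp only [sum_add_distrib, sum_ite_eq', mem_range, sum_const, card_range, nsmul_eq_mul]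
  rw [if_pos hn, if_pos (by omega)]
  ring

theorem one_dotProduct_inv_ar1Cov_mulVec_one {n : ℕ} (hn : 0 < n) {l : K} (hl : 1 + l ≠ 0)
    (hdet : IsUnit (ar1Cov n l).det) :
    1 ⬝ᵥ (ar1Cov n l)⁻¹ *ᵥ 1 = (n * (1 - l) + 2 * l) / (1 + l) := by
  have := (ar1Cov n l).invertibleOfIsUnitDet hdet
  rw [inv_mulVec_eq_vec (ar1Cov_mulVec_ar1CovInvRowSums n hl).symm,
    one_dotProduct_ar1CovInvRowSums hn]

end Field

theorem mul_one_sub_add_two_mul_div_one_add_le {a l : ℝ} (ha : 0 ≤ a) (hl0 : 0 ≤ l)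
    (hl1 : l ≤ 1) :
    (a * (1 - l) + 2 * l) / (1 + l) ≤ a * (1 - l) + 2 := by
  rw [div_le_iff₀ (by linarith)]
  nlinarith [mul_nonneg (mul_nonneg ha hl0) (sub_nonneg.2 hl1)]

theorem smul_dotProduct_mulVec_smul {R ι : Type*} [CommRing R] [Fintype ι] (A : Matrix ι ι R)
    (c : R) (x : ι → R) :
    (c • x) ⬝ᵥ A *ᵥ (c • x) = c ^ 2 * (x ⬝ᵥ A *ᵥ x) := by
  rw [mulVec_smul, smul_dotProduct, dotProduct_smul, smul_eq_mul, smul_eq_mul]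
  ring

/-- With `λ = 1 - 1/T_mix`, the constant-mean-shift quadratic form of the AR(1) precision
matrix satisfies `𝟙ᵀ Σ⁻¹ 𝟙 ≤ n/T_mix + 2`, so the KL divergence between two `n`-step
stationary Gaussian AR(1) trajectories with identical covariance `Σ` and constant mean
vectors `μ𝟙`, `μ'𝟙` — given by `(m - m')ᵀ Σ⁻¹ (m - m')/2` — is at most
`(μ-μ')²(n/T_mix + 2)/2`. -/
theorem ar1_constant_shift_kl_bound (n Tmix : ℕ) (hn : 2 ≤ n) (hT : 1 ≤ Tmix)
    (l : ℝ) (hl : l = 1 - 1 / (Tmix : ℝ))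
    (S : Matrix (Fin n) (Fin n) ℝ)
    (hS : ∀ i j, S i j = l ^ ((i : ℤ) - (j : ℤ)).natAbs)
    (μ μ' : ℝ) :
    (1 : Fin n → ℝ) ⬝ᵥ S⁻¹.mulVec (1 : Fin n → ℝ) ≤ (n : ℝ) / (Tmix : ℝ) + 2 ∧
      (μ • (1 : Fin n → ℝ) - μ' • (1 : Fin n → ℝ)) ⬝ᵥ
          S⁻¹.mulVec (μ • (1 : Fin n → ℝ) - μ' • (1 : Fin n → ℝ)) / 2 ≤
        (μ - μ') ^ 2 * ((n : ℝ) / (Tmix : ℝ) + 2) / 2 := by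
  obtain rfl : S = ar1Cov n l := Matrix.ext hS
  have hT' : (1 : ℝ) ≤ Tmix := by exact_mod_cast hT
  have hl0 : 0 ≤ l := by
    rw [hl, sub_nonneg, div_le_one₀ (by linarith)]
    exact hT'
  have hl1 : l ≤ 1 := by
    rw [hl]
    linarith [show 0 < 1 / (Tmix : ℝ) by positivity]
  have hform : 1 ⬝ᵥ (ar1Cov n l)⁻¹ *ᵥ 1 ≤ (n : ℝ) / Tmix + 2 := by
    by_cases hdet : IsUnit (ar1Cov n l).det
    · rw [one_dotProduct_inv_ar1Cov_mulVec_one (by omega) (by linarith) hdet,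
        div_eq_mul_one_div (n : ℝ), ← sub_sub_cancel 1 (1 / (Tmix : ℝ)), ← hl]
      exact mul_one_sub_add_two_mul_div_one_add_le n.cast_nonneg hl0 hl1
    · rw [nonsing_inv_apply_not_isUnit _ hdet, zero_mulVec, dotProduct_zero]
      positivity
  refine ⟨hform, ?_⟩
  rw [← sub_smul, smul_dotProduct_mulVec_smul]
  gcongr
end

section
/- (Varshamov–Gilbert bound) For every d ≥ 8 there exists a subset V of the hypercube {0,1}^d with |V| ≥ e^{d/8} such that any two distinct elements of V differ in at least d/4 coordinates. -/
/-!
Take a maximal family of words at pairwise Hamming distance more than `⌊d/4⌋`. By maximality the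
balls of radius `⌊d/4⌋` around its members cover `{0,1}^d`, so it has at least `2^d / |B|` members,
where `|B| ≤ 3^{d/4} (4/3)^d` by Chernoff's bound. Hence it has at least `(3^{3/4}/2)^d ≥ e^{d/8}`
members.
-/

open Finset

section Packing

variable {α : Type*}

/-- A maximal `r`-free set is `r`-dominating, since a point not `r`-related to it could be added. -/
theorem exists_pairwise_not_rel_forall_exists_rel [Finite α] (r : α → α → Prop)
    (hrefl : ∀ x, r x x) (hsymm : ∀ x y, r x y → r y x) :
    ∃ V : Finset α, (V : Set α).Pairwise (fun x y => ¬ r x y) ∧ ∀ x, ∃ v ∈ V, r x v := by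
  classical
  obtain ⟨V, hV, hVmax⟩ := (Set.toFinite {V : Finset α | (V : Set α).Pairwise fun x y => ¬ r x y}
    ).exists_maximal ⟨∅, by simp⟩
  refine ⟨V, hV, fun x => ?_⟩
  by_contra! hfar
  have hinsert : ((insert x V : Finset α) : Set α).Pairwise fun x y => ¬ r x y := by
    rw [coe_insert, Set.pairwise_insert]
    exact ⟨hV, fun v hv _ => ⟨hfar v hv, fun h => hfar v hv (hsymm v x h)⟩⟩
  have hxV : x ∈ V := hVmax hinsert (subset_insert x V) (mem_insert_self x V)
  exact hfar x hxV (hrefl x)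

theorem card_le_card_mul_of_forall_exists_rel [Fintype α] (r : α → α → Prop) [DecidableRel r]
    {V : Finset α} (hV : ∀ x, ∃ v ∈ V, r x v) {m : ℕ} (hm : ∀ v, #{x | r x v} ≤ m) :
    Fintype.card α ≤ #V * m := by
  classical
  calc Fintype.card α ≤ #(V.biUnion fun v => {x | r x v}) := by
        refine card_le_card fun x _ => ?_
        obtain ⟨v, hv, hxv⟩ := hV x
        exact mem_biUnion.2 ⟨v, hv, by simpa using hxv⟩
    _ ≤ #V * m := card_biUnion_le_card_mul _ _ _ fun v _ => hm v

end Packing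

section HammingBall

variable {ι : Type*} [Fintype ι]

theorem card_filter_hammingDist_le_le [DecidableEq ι] (v : ι → Bool) (k : ℕ) :
    #{x | hammingDist x v ≤ k} ≤ #{s : Finset ι | #s ≤ k} := by
  refine card_le_card_of_injOn (fun x => ({i | x i ≠ v i} : Finset ι)) (fun x hx => ?_)
    fun x _ y _ hxy => ?_
  · simpa [hammingDist] using hx
  · funext i
    have hi := congrArg (i ∈ ·) hxy
    simp only [mem_filter, mem_univ, true_and, eq_iff_iff] at hi
    cases hx : x i <;> cases hy : y i <;> cases hv : v i <;> simp_all

/-- Chernoff's bound: each term of `∑ s, t ^ #s = (1 + t) ^ n` with `#s ≤ k` is at least `t ^ k`. -/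
theorem card_filter_card_le_le {R : Type*} [Field R] [LinearOrder R] [IsStrictOrderedRing R]
    (k : ℕ) {t : R} (ht₀ : 0 < t) (ht₁ : t ≤ 1) :
    (#{s : Finset ι | #s ≤ k} : R) ≤ t⁻¹ ^ k * (1 + t) ^ Fintype.card ι := by
  rw [inv_pow, ← div_eq_inv_mul, le_div_iff₀ (pow_pos ht₀ k), card_eq_sum_ones, Nat.cast_sum,
    Nat.cast_one, sum_mul, one_mul, add_comm, ← Fintype.sum_pow_mul_eq_add_pow]
  calc ∑ s ∈ {s : Finset ι | #s ≤ k}, t ^ k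
      ≤ ∑ s ∈ {s : Finset ι | #s ≤ k}, t ^ #s * 1 ^ (Fintype.card ι - #s) :=
        sum_le_sum fun s hs => by
          simpa using pow_le_pow_of_le_one ht₀.le ht₁ (mem_filter.1 hs).2
    _ ≤ ∑ s : Finset ι, t ^ #s * 1 ^ (Fintype.card ι - #s) :=
        sum_le_sum_of_subset_of_nonneg (subset_univ _) fun _ _ _ => by positivity

end HammingBall

theorem exp_div_eight_mul_le_two_pow {d k : ℕ} (hk : 4 * k ≤ d) :
    Real.exp (d / 8) * (3 ^ k * (4 / 3) ^ d) ≤ 2 ^ d := by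
  refine (pow_le_pow_iff_left₀ (by positivity) (by positivity) (by norm_num : 8 ≠ 0)).1 ?_
  calc (Real.exp (d / 8) * (3 ^ k * (4 / 3) ^ d)) ^ 8
      = Real.exp 1 ^ d * 9 ^ (4 * k) * ((4 / 3) ^ 8) ^ d := by
        have hexp : Real.exp (d / 8) ^ 8 = Real.exp 1 ^ d := by
          rw [← Real.exp_nat_mul, Real.exp_one_pow]
          congr 1
          push_cast
          ring
        rw [mul_pow, hexp, show (9 : ℝ) = 3 ^ 2 by norm_num, ← pow_mul, ← pow_mul]
        ring
    _ ≤ Real.exp 1 ^ d * 9 ^ d * ((4 / 3) ^ 8) ^ d := by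
        gcongr
        norm_num
    _ = (Real.exp 1 * 9 * (4 / 3) ^ 8) ^ d := by rw [mul_pow, mul_pow]
    _ ≤ (2 ^ 8) ^ d := by
        gcongr
        nlinarith [Real.exp_one_lt_d9]
    _ = (2 ^ d) ^ 8 := by rw [← pow_mul, ← pow_mul, mul_comm]

theorem varshamov_gilbert_general (d : ℕ) :
    ∃ V : Finset (Fin d → Bool),
      (V.card : ℝ) ≥ Real.exp ((d : ℝ) / 8) ∧
      ∀ v ∈ V, ∀ v' ∈ V, v ≠ v' → ((hammingDist v v' : ℝ) ≥ (d : ℝ) / 4) := by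
  obtain ⟨V, hVsep, hVdom⟩ := exists_pairwise_not_rel_forall_exists_rel
    (fun x y : Fin d → Bool => hammingDist x y ≤ d / 4)
    (fun x => by simp) fun x y h => (hammingDist_comm y x).trans_le h
  refine ⟨V, ?_, fun v hv v' hv' hne => ?_⟩
  · have hcover := card_le_card_mul_of_forall_exists_rel _ hVdom
      fun v => card_filter_hammingDist_le_le v (d / 4)
    have hball := card_filter_card_le_le (ι := Fin d) (d / 4)
      (by norm_num : (0 : ℝ) < 3⁻¹) (by norm_num)
    have hcount := exp_div_eight_mul_le_two_pow (Nat.mul_div_le d 4)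
    simp only [Fintype.card_fun, Fintype.card_bool, Fintype.card_fin] at hcover
    norm_num at hball
    refine le_of_mul_le_mul_right ?_ (by positivity : (0 : ℝ) < 3 ^ (d / 4) * (4 / 3) ^ d)
    calc Real.exp (d / 8) * _ ≤ (2 : ℝ) ^ d := hcount
      _ ≤ #V * #{s : Finset (Fin d) | #s ≤ d / 4} := by exact_mod_cast hcover
      _ ≤ _ := by gcongr
  · have hfar : d / 4 < hammingDist v v' := not_le.1 (hVsep hv hv' hne)
    have hfar' : (d : ℝ) < 4 * hammingDist v v' := by exact_mod_cast (by omega : d < 4 * _)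
    linarith

/-- Varshamov–Gilbert bound: for every `d ≥ 8` there is a set `V` of binary strings of
length `d` with `|V| ≥ e^{d/8}` and pairwise Hamming distance at least `d/4`. -/
theorem varshamov_gilbert (d : ℕ) (hd : 8 ≤ d) :
    ∃ V : Finset (Fin d → Bool),
      (V.card : ℝ) ≥ Real.exp ((d : ℝ) / 8) ∧
      ∀ v ∈ V, ∀ v' ∈ V, v ≠ v' → ((hammingDist v v' : ℝ) ≥ (d : ℝ) / 4) :=
  varshamov_gilbert_general d
end
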